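/- arXiv:2507.08724 — 2 statements merged into one kernel-verified Lean document; each statement's English description precedes it below -/
import Mathlib

section
/- Assume there exists at least one pair of indices with h_i − h_j > 2L, let β* be the maximum over all such pairs of (h_i − h_j − 2L)/|t_i − t_j|, and let (i, j) be a pair attaining this maximum with t_i < t_j (so h_i − h_j > 2L and β* = (h_i − h_j − 2L)/(t_j − t_i)). Then every feasible β*-path g satisfies g(t_i) = h_i − L and g(t_j) = h_j + L, and g is affine with slope −β* on the whole interval [t_i, t_j]. (In particular, any feasible β*-path must include the reflex points l_i and u_j.) -/
/-- `PWLinSlope β a b g` : `g` is continuous piecewise-linear on `[a, b]`,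
affine with slope `β` or `-β` on each interval of some finite partition of `[a, b]`. -/
def PWLinSlope (β a b : ℝ) (g : ℝ → ℝ) : Prop :=
  ∃ m : ℕ, ∃ s : ℕ → ℝ, s 0 = a ∧ s m = b ∧ (∀ k < m, s k < s (k + 1)) ∧
    ∀ k < m, ∃ σ : ℝ, (σ = β ∨ σ = -β) ∧
      ∀ x ∈ Set.Icc (s k) (s (k + 1)), g x = g (s k) + σ * (x - s k)

/-- `Feasible a b L f β g` : `g` is a feasible `β`-path over `[a, b]` for the corridor of
half-width `L` around the α-path `f`. -/
def Feasible (a b L : ℝ) (f : ℝ → ℝ) (β : ℝ) (g : ℝ → ℝ) : Prop :=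
  PWLinSlope β a b g ∧ ∀ x ∈ Set.Icc a b, |g x - f x| ≤ L

lemma pwlin_key (β a b : ℝ) (g : ℝ → ℝ) (hβ : 0 ≤ β)
    (m : ℕ) (s : ℕ → ℝ) (hs0 : s 0 = a)
    (hpiece : ∀ k < m, ∃ σ : ℝ, (σ = β ∨ σ = -β) ∧
      ∀ x ∈ Set.Icc (s k) (s (k + 1)), g x = g (s k) + σ * (x - s k)) :
    ∀ k ≤ m, ∀ x y, a ≤ x → x ≤ y → y ≤ s k → |g y - g x| ≤ β * (y - x) := by
  intro k
  induction k with
  | zero =>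
    intro _ x y hax hxy hy
    rw [hs0] at hy
    have : x = y := le_antisymm hxy (by linarith)
    subst this
    simp
  | succ k ih =>
    intro hk1 x y hax hxy hy
    have hkm : k < m := hk1
    obtain ⟨σ, hσ, hform⟩ := hpiece k hkm
    have hσabs : |σ| ≤ β := by
      rcases hσ with rfl | rfl
      · rw [abs_of_nonneg hβ]
      · rw [abs_neg, abs_of_nonneg hβ]
    by_cases hyk : y ≤ s k
    · exact ih (le_of_lt hkm) x y hax hxy hyk
    · push_neg at hyk
      have hgy : g y = g (s k) + σ * (y - s k) := hform y ⟨hyk.le, hy⟩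
      by_cases hxk : s k ≤ x
      · have hgx : g x = g (s k) + σ * (x - s k) := hform x ⟨hxk, le_trans hxy hy⟩
        have heq : g y - g x = σ * (y - x) := by rw [hgy, hgx]; ring
        rw [heq, abs_mul, abs_of_nonneg (by linarith : (0:ℝ) ≤ y - x)]
        exact mul_le_mul_of_nonneg_right hσabs (by linarith)
      · push_neg at hxk
        have h1 : |g (s k) - g x| ≤ β * (s k - x) := ih (le_of_lt hkm) x (s k) hax hxk.le le_rfl
        have h2 : |g y - g (s k)| ≤ β * (y - s k) := by
          have heq : g y - g (s k) = σ * (y - s k) := by rw [hgy]; ring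
          rw [heq, abs_mul, abs_of_nonneg (by linarith : (0:ℝ) ≤ y - s k)]
          exact mul_le_mul_of_nonneg_right hσabs (by linarith)
        calc |g y - g x| ≤ |g y - g (s k)| + |g (s k) - g x| := abs_sub_le _ _ _
          _ ≤ β * (y - s k) + β * (s k - x) := add_le_add h2 h1
          _ = β * (y - x) := by ring

lemma pwlin_lipschitz {β a b : ℝ} {g : ℝ → ℝ} (hβ : 0 ≤ β) (hp : PWLinSlope β a b g) :
    ∀ x y, a ≤ x → x ≤ y → y ≤ b → |g y - g x| ≤ β * (y - x) := by
  obtain ⟨m, s, hs0, hsm, _, hpiece⟩ := hp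
  intro x y hx hxy hy
  exact pwlin_key β a b g hβ m s hs0 hpiece m le_rfl x y hx hxy (by rw [hsm]; exact hy)

/-- if (i, j), with t i < t j, attains the maximum slope β* among all
overlapping pairs, then every feasible β*-path passes through l_i and u_j and is affine
with slope -β* on all of [t i, t j]. -/
theorem stmt_8
    (n : ℕ) (hn : 1 ≤ n) (t h : ℕ → ℝ) (α L : ℝ) (f : ℝ → ℝ)
    (hα : 0 < α) (hL : 0 < L)
    (ht : ∀ i < n, t i < t (i + 1))
    (hslope : ∀ i < n,
      h (i + 1) - h i = α * (t (i + 1) - t i) ∨ h (i + 1) - h i = -α * (t (i + 1) - t i))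
    (halt : ∀ i, i + 1 < n → (h (i + 2) - h (i + 1)) * (h (i + 1) - h i) < 0)
    (hf : ∀ i < n, ∀ x ∈ Set.Icc (t i) (t (i + 1)),
      f x = h i + (x - t i) * ((h (i + 1) - h i) / (t (i + 1) - t i)))
    (i j : ℕ) (hi : i ≤ n) (hj : j ≤ n) (htij : t i < t j)
    (hover : h i - h j > 2 * L)
    (βstar : ℝ) (hβstar : βstar = (h i - h j - 2 * L) / (t j - t i))
    (hmax : ∀ i' ≤ n, ∀ j' ≤ n, h i' - h j' > 2 * L →
      (h i' - h j' - 2 * L) / |t i' - t j'| ≤ βstar)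
    (g : ℝ → ℝ) (hg : Feasible (t 0) (t n) L f βstar g) :
    g (t i) = h i - L ∧ g (t j) = h j + L ∧
      ∀ x ∈ Set.Icc (t i) (t j), g x = (h i - L) - βstar * (x - t i) := by
  have htmono : ∀ p q, p ≤ q → q ≤ n → t p ≤ t q := by
    intro p q hpq
    induction q, hpq using Nat.le_induction with
    | base => intro _; exact le_rfl
    | succ q hq ih => intro hq1; exact le_trans (ih (by omega)) (ht q (by omega)).le
  have hfk : ∀ k ≤ n, f (t k) = h k := by
    intro k hk
    rcases lt_or_eq_of_le hk with hkn | rfl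
    · have := hf k hkn (t k) ⟨le_rfl, (ht k hkn).le⟩
      simpa using this
    · have h1 : k - 1 < k := by omega
      have h2 : k - 1 + 1 = k := by omega
      have hval := hf (k-1) h1
      rw [h2] at hval
      have ht' : t (k-1) < t k := by have := ht (k-1) h1; rwa [h2] at this
      have hne : t k - t (k-1) ≠ 0 := ne_of_gt (by linarith)
      have := hval (t k) ⟨ht'.le, le_rfl⟩
      rw [this]
      field_simp
      ring
  have hβpos : 0 < βstar := by
    rw [hβstar]; apply div_pos <;> linarith
  have lip := pwlin_lipschitz hβpos.le hg.1
  have hcorr := hg.2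
  have hti0 : t 0 ≤ t i := htmono 0 i (Nat.zero_le _) hi
  have htjn : t j ≤ t n := htmono j n hj le_rfl
  have h1 : |g (t i) - f (t i)| ≤ L := hcorr _ ⟨hti0, le_trans htij.le htjn⟩
  have h2 : |g (t j) - f (t j)| ≤ L := hcorr _ ⟨le_trans hti0 htij.le, htjn⟩
  rw [hfk i hi, abs_le] at h1
  rw [hfk j hj, abs_le] at h2
  have hmul : βstar * (t j - t i) = h i - h j - 2 * L :=
    by rw [hβstar, div_mul_cancel₀ _ (ne_of_gt (sub_pos.mpr htij))]
  have hl := abs_le.mp (lip (t i) (t j) hti0 htij.le htjn)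
  have e1 : g (t i) = h i - L := by
    obtain ⟨ha, hb⟩ := hl
    linarith [h1.1, h1.2, h2.1, h2.2]
  have e2 : g (t j) = h j + L := by
    obtain ⟨ha, hb⟩ := hl
    linarith [h1.1, h1.2, h2.1, h2.2]
  refine ⟨e1, e2, ?_⟩
  intro x hx
  have la := abs_le.mp (lip (t i) x hti0 hx.1 (hx.2.trans htjn))
  have lb := abs_le.mp (lip x (t j) (hti0.trans hx.1) hx.2 htjn)
  have hsplit : βstar * (t j - x) + βstar * (x - t i) = βstar * (t j - t i) := by ring
  obtain ⟨la1, la2⟩ := la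
  obtain ⟨lb1, lb2⟩ := lb
  linarith
end

section
/- Let β* = 0 if h_i − h_j ≤ 2L for all indices i, j, and otherwise let β* be the maximum of (h_i − h_j − 2L)/|t_i − t_j| over all pairs with h_i − h_j > 2L. Then every feasible β*-path has arclength (t_n − t_0)·√(1 + (β*)²), and for every β ≥ 0, every feasible β-path has arclength at least (t_n − t_0)·√(1 + (β*)²). Hence any feasible β*-path minimizes the length among all feasible paths traversing the corridor. -/
open Set

theorem exists_mem_Ico_of_le_of_lt {α : Type*} [LinearOrder α] {m : ℕ} {u : ℕ → α} {p : α}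
    (h0 : u 0 ≤ p) (hm : p < u m) : ∃ j < m, u j ≤ p ∧ p < u (j + 1) := by
  induction m with
  | zero => exact absurd h0 hm.not_ge
  | succ m ih =>
    rcases lt_or_ge p (u m) with hpm | hmp
    · obtain ⟨j, hj, hjp⟩ := ih hpm
      exact ⟨j, by omega, hjp⟩
    · exact ⟨m, m.lt_succ_self, hmp, hm⟩

namespace PWLinSlope

variable {β a b : ℝ} {g : ℝ → ℝ}

theorem slope_eq_or_eq_neg (hg : PWLinSlope β a b g) {p q c σ : ℝ} (hpq : p < q)
    (hap : a ≤ p) (hqb : q ≤ b) (haff : ∀ x ∈ Icc p q, g x = c + σ * x) :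
    σ = β ∨ σ = -β := by
  obtain ⟨m, u, rfl, rfl, -, hseg⟩ := hg
  obtain ⟨j, hj, hujp, hpu⟩ := exists_mem_Ico_of_le_of_lt hap (hpq.trans_le hqb)
  obtain ⟨σ', hσ', hform⟩ := hseg j hj
  set y := min q (u (j + 1))
  have hpy : p < y := lt_min hpq hpu
  have hσσ' : σ * (y - p) = σ' * (y - p) := by
    linear_combination haff p ⟨le_rfl, hpq.le⟩ - haff y ⟨hpy.le, min_le_left _ _⟩
      + hform y ⟨hujp.trans hpy.le, min_le_right _ _⟩ - hform p ⟨hujp, hpu.le⟩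
  rwa [mul_right_cancel₀ (sub_ne_zero.2 hpy.ne') hσσ']

theorem abs_sub_le (hg : PWLinSlope β a b g) {x y : ℝ} (hx : x ∈ Icc a b) (hy : y ∈ Icc a b) :
    |g y - g x| ≤ |β| * |y - x| := by
  obtain ⟨m, u, hu0, hum, -, hseg⟩ := hg
  have hsegment : ∀ k < m, ∀ x ∈ Icc (u k) (u (k + 1)), ∀ y ∈ Icc (u k) (u (k + 1)),
      |g y - g x| = |β| * |y - x| := by
    intro k hk x hx y hy
    obtain ⟨σ, hσ, hform⟩ := hseg k hk
    rw [hform x hx, hform y hy, show g (u k) + σ * (y - u k) - (g (u k) + σ * (x - u k))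
      = σ * (y - x) by ring, abs_mul]
    rcases hσ with rfl | rfl <;> simp
  have hprefix : ∀ j ≤ m, ∀ x y, a ≤ x → x ≤ y → y ≤ u j → |g y - g x| ≤ |β| * (y - x) := by
    intro j
    induction j with
    | zero =>
      intro _ x y hax hxy hyu
      obtain rfl : x = y := by linarith
      simp
    | succ j ih =>
      intro hj x y hax hxy hyu
      rcases le_or_gt y (u j) with hyj | hyj
      · exact ih (by omega) x y hax hxy hyj
      rcases le_or_gt (u j) x with hxj | hxj
      · rw [hsegment j (by omega) x ⟨hxj, hxy.trans hyu⟩ y ⟨hyj.le, hyu⟩,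
          abs_of_nonneg (sub_nonneg.2 hxy)]
      · calc |g y - g x| ≤ |g y - g (u j)| + |g (u j) - g x| := _root_.abs_sub_le _ _ _
          _ ≤ |β| * (y - u j) + |β| * (u j - x) := by
            gcongr
            · rw [hsegment j (by omega) (u j) ⟨le_rfl, hyj.le.trans hyu⟩ y ⟨hyj.le, hyu⟩,
                abs_of_pos (sub_pos.2 hyj)]
            · exact ih (by omega) x (u j) hax hxj.le le_rfl
          _ = |β| * (y - x) := by ring
  wlog hxy : x ≤ y generalizing x y
  · rw [abs_sub_comm, abs_sub_comm y]
    exact this hy hx (le_of_not_ge hxy)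
  rw [abs_of_nonneg (sub_nonneg.2 hxy)]
  exact hprefix m le_rfl x y hx.1 hxy (hum ▸ hy.2)

theorem sum_segment_length_eq (hg : PWLinSlope β a b g) {m : ℕ} {s : ℕ → ℝ}
    (hs0 : s 0 = a) (hsm : s m = b) (hs : ∀ k < m, s k < s (k + 1))
    (haff : ∀ k < m, ∃ c σ : ℝ, ∀ x ∈ Icc (s k) (s (k + 1)), g x = c + σ * x) :
    ∑ k ∈ Finset.range m, √((s (k + 1) - s k) ^ 2 + (g (s (k + 1)) - g (s k)) ^ 2)
      = (b - a) * √(1 + β ^ 2) := by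
  have hsmono : MonotoneOn s (Iic m) := (strictMonoOn_Iic_of_lt_succ hs).monotoneOn
  have hterm : ∀ k < m, √((s (k + 1) - s k) ^ 2 + (g (s (k + 1)) - g (s k)) ^ 2)
      = (s (k + 1) - s k) * √(1 + β ^ 2) := by
    intro k hk
    obtain ⟨c, σ, haffk⟩ := haff k hk
    have hak : a ≤ s k := hs0 ▸ hsmono (Nat.zero_le _) hk.le (Nat.zero_le _)
    have hkb : s (k + 1) ≤ b := hsm ▸ hsmono hk (le_refl m) hk
    have hσ : σ ^ 2 = β ^ 2 := by
      rcases hg.slope_eq_or_eq_neg (hs k hk) hak hkb haffk with rfl | rfl <;> ring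
    have hΔ : g (s (k + 1)) - g (s k) = σ * (s (k + 1) - s k) := by
      rw [haffk _ ⟨(hs k hk).le, le_rfl⟩, haffk _ ⟨le_rfl, (hs k hk).le⟩]
      ring
    rw [hΔ, mul_pow, hσ, show ∀ d : ℝ, d ^ 2 + β ^ 2 * d ^ 2 = d ^ 2 * (1 + β ^ 2) by
      intro d; ring, Real.sqrt_mul (sq_nonneg _), Real.sqrt_sq (sub_nonneg.2 (hs k hk).le)]
  rw [Finset.sum_congr rfl fun k hk => hterm k (Finset.mem_range.1 hk), ← Finset.sum_mul,
    Finset.sum_range_sub s, hsm, hs0]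

end PWLinSlope

theorem Feasible.sub_sub_le {a b L β : ℝ} {f g : ℝ → ℝ} (hg : Feasible a b L f β g) {x y : ℝ}
    (hx : x ∈ Icc a b) (hy : y ∈ Icc a b) : f y - f x - 2 * L ≤ |β| * |y - x| := by
  have hgx := abs_le.1 (hg.2 x hx)
  have hgy := abs_le.1 (hg.2 y hy)
  linarith [le_abs_self (g y - g x), hg.1.abs_sub_le hx hy]

theorem interpolant_apply_knot {n : ℕ} {t h : ℕ → ℝ} {f : ℝ → ℝ} (hn : 1 ≤ n)
    (ht : ∀ i < n, t i < t (i + 1))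
    (hf : ∀ i < n, ∀ x ∈ Icc (t i) (t (i + 1)),
      f x = h i + (x - t i) * ((h (i + 1) - h i) / (t (i + 1) - t i)))
    {i : ℕ} (hi : i ≤ n) : f (t i) = h i := by
  rcases hi.lt_or_eq with hi | rfl
  · simpa using hf i hi (t i) ⟨le_rfl, (ht i hi).le⟩
  · obtain ⟨i, rfl⟩ : ∃ k, i = k + 1 := ⟨i - 1, by omega⟩
    have hti := ht i i.lt_succ_self
    rw [hf i i.lt_succ_self _ ⟨hti.le, le_rfl⟩, mul_div_cancel₀ _ (sub_pos.2 hti).ne']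
    ring

def IsCriticalSlope (n : ℕ) (t h : ℕ → ℝ) (L βstar : ℝ) : Prop :=
  ((∀ i ≤ n, ∀ j ≤ n, h i - h j ≤ 2 * L) → βstar = 0) ∧
    ((∃ i ≤ n, ∃ j ≤ n, h i - h j > 2 * L) →
      IsGreatest {s : ℝ | ∃ i ≤ n, ∃ j ≤ n,
        h i - h j > 2 * L ∧ s = (h i - h j - 2 * L) / |t i - t j|} βstar)

namespace IsCriticalSlope

variable {n : ℕ} {t h : ℕ → ℝ} {L βstar : ℝ}

theorem nonneg (hβ : IsCriticalSlope n t h L βstar) : 0 ≤ βstar := by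
  by_cases hc : ∀ i ≤ n, ∀ j ≤ n, h i - h j ≤ 2 * L
  · exact (hβ.1 hc).ge
  · push Not at hc
    obtain ⟨⟨i, -, j, -, hgt, rfl⟩, -⟩ := hβ.2 hc
    exact div_nonneg (by linarith) (abs_nonneg _)

theorem le_of_forall_sub_le (hβ : IsCriticalSlope n t h L βstar) {β : ℝ} (hβ0 : 0 ≤ β)
    (hbound : ∀ i ≤ n, ∀ j ≤ n, h i - h j - 2 * L ≤ β * |t i - t j|) : βstar ≤ β := by
  by_cases hc : ∀ i ≤ n, ∀ j ≤ n, h i - h j ≤ 2 * L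
  · rwa [hβ.1 hc]
  · push Not at hc
    obtain ⟨⟨i, hi, j, hj, -, rfl⟩, -⟩ := hβ.2 hc
    exact div_le_of_le_mul₀ (abs_nonneg _) hβ0 (hbound i hi j hj)

end IsCriticalSlope

theorem stmt_11_general
    (n : ℕ) (hn : 1 ≤ n) (t h : ℕ → ℝ) (L : ℝ) (f : ℝ → ℝ)
    (ht : ∀ i < n, t i < t (i + 1))
    (hf : ∀ i < n, ∀ x ∈ Set.Icc (t i) (t (i + 1)),
      f x = h i + (x - t i) * ((h (i + 1) - h i) / (t (i + 1) - t i)))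
    (βstar : ℝ)
    (hβ0 : (∀ i ≤ n, ∀ j ≤ n, h i - h j ≤ 2 * L) → βstar = 0)
    (hβmax : (∃ i ≤ n, ∃ j ≤ n, h i - h j > 2 * L) →
      IsGreatest {s : ℝ | ∃ i ≤ n, ∃ j ≤ n,
        h i - h j > 2 * L ∧ s = (h i - h j - 2 * L) / |t i - t j|} βstar) :
    (∀ g : ℝ → ℝ, Feasible (t 0) (t n) L f βstar g →
      ∀ (m : ℕ) (s : ℕ → ℝ), s 0 = t 0 → s m = t n → (∀ k < m, s k < s (k + 1)) →
        (∀ k < m, ∃ c σ : ℝ, ∀ x ∈ Set.Icc (s k) (s (k + 1)), g x = c + σ * x) →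
        ∑ k ∈ Finset.range m,
            Real.sqrt ((s (k + 1) - s k) ^ 2 + (g (s (k + 1)) - g (s k)) ^ 2)
          = (t n - t 0) * Real.sqrt (1 + βstar ^ 2)) ∧
    (∀ β : ℝ, 0 ≤ β → ∀ g : ℝ → ℝ, Feasible (t 0) (t n) L f β g →
      ∀ (m : ℕ) (s : ℕ → ℝ), s 0 = t 0 → s m = t n → (∀ k < m, s k < s (k + 1)) →
        (∀ k < m, ∃ c σ : ℝ, ∀ x ∈ Set.Icc (s k) (s (k + 1)), g x = c + σ * x) →
        (t n - t 0) * Real.sqrt (1 + βstar ^ 2) ≤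
          ∑ k ∈ Finset.range m,
            Real.sqrt ((s (k + 1) - s k) ^ 2 + (g (s (k + 1)) - g (s k)) ^ 2)) := by
  have hcrit : IsCriticalSlope n t h L βstar := ⟨hβ0, hβmax⟩
  have htmono : MonotoneOn t (Iic n) := (strictMonoOn_Iic_of_lt_succ ht).monotoneOn
  have hknot : ∀ i ≤ n, t i ∈ Icc (t 0) (t n) := fun i hi =>
    ⟨htmono (Nat.zero_le _) hi (Nat.zero_le _), htmono hi (le_refl n) hi⟩
  refine ⟨fun g hg m s hs0 hsm hs haff => hg.1.sum_segment_length_eq hs0 hsm hs haff,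
    fun β hβ g hg m s hs0 hsm hs haff => ?_⟩
  rw [hg.1.sum_segment_length_eq hs0 hsm hs haff]
  have hβstar : βstar ≤ β := hcrit.le_of_forall_sub_le hβ fun i hi j hj => by
    simpa [interpolant_apply_knot hn ht hf, hi, hj, abs_of_nonneg hβ]
      using hg.sub_sub_le (hknot j hj) (hknot i hi)
  have ht0n : t 0 ≤ t n := (hknot n le_rfl).1
  gcongr
  exact hcrit.nonneg

/-- every feasible β*-path has arclength (t n - t 0)·√(1 + β*²), and every
feasible β-path (β ≥ 0) has arclength at least that; arclength is computed as the sum of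
segment lengths over any partition of [t 0, t n] into intervals on which the path is
affine. -/
theorem stmt_11
    (n : ℕ) (hn : 1 ≤ n) (t h : ℕ → ℝ) (α L : ℝ) (f : ℝ → ℝ)
    (hα : 0 < α) (hL : 0 < L)
    (ht : ∀ i < n, t i < t (i + 1))
    (hslope : ∀ i < n,
      h (i + 1) - h i = α * (t (i + 1) - t i) ∨ h (i + 1) - h i = -α * (t (i + 1) - t i))
    (halt : ∀ i, i + 1 < n → (h (i + 2) - h (i + 1)) * (h (i + 1) - h i) < 0)
    (hf : ∀ i < n, ∀ x ∈ Set.Icc (t i) (t (i + 1)),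
      f x = h i + (x - t i) * ((h (i + 1) - h i) / (t (i + 1) - t i)))
    (βstar : ℝ)
    (hβ0 : (∀ i ≤ n, ∀ j ≤ n, h i - h j ≤ 2 * L) → βstar = 0)
    (hβmax : (∃ i ≤ n, ∃ j ≤ n, h i - h j > 2 * L) →
      IsGreatest {s : ℝ | ∃ i ≤ n, ∃ j ≤ n,
        h i - h j > 2 * L ∧ s = (h i - h j - 2 * L) / |t i - t j|} βstar) :
    (∀ g : ℝ → ℝ, Feasible (t 0) (t n) L f βstar g →
      ∀ (m : ℕ) (s : ℕ → ℝ), s 0 = t 0 → s m = t n → (∀ k < m, s k < s (k + 1)) →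
        (∀ k < m, ∃ c σ : ℝ, ∀ x ∈ Set.Icc (s k) (s (k + 1)), g x = c + σ * x) →
        ∑ k ∈ Finset.range m,
            Real.sqrt ((s (k + 1) - s k) ^ 2 + (g (s (k + 1)) - g (s k)) ^ 2)
          = (t n - t 0) * Real.sqrt (1 + βstar ^ 2)) ∧
    (∀ β : ℝ, 0 ≤ β → ∀ g : ℝ → ℝ, Feasible (t 0) (t n) L f β g →
      ∀ (m : ℕ) (s : ℕ → ℝ), s 0 = t 0 → s m = t n → (∀ k < m, s k < s (k + 1)) →
        (∀ k < m, ∃ c σ : ℝ, ∀ x ∈ Set.Icc (s k) (s (k + 1)), g x = c + σ * x) →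
        (t n - t 0) * Real.sqrt (1 + βstar ^ 2) ≤
          ∑ k ∈ Finset.range m,
            Real.sqrt ((s (k + 1) - s k) ^ 2 + (g (s (k + 1)) - g (s k)) ^ 2)) :=
  stmt_11_general n hn t h L f ht hf βstar hβ0 hβmax
end
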